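/- arXiv:2012.12574 — 2 statements merged into one kernel-verified Lean document; each statement's English description precedes it below -/
import Mathlib

section
/- Assume T''(x₀) = 0. Then γ̃ is twice differentiable at x₀ and its Hessian matrix is D²γ̃(x₀) = (1/(2π))·[[2μ² + p, q],[q, 2μ² − p]], where μ² = |T'(x₀)|², p = Re(T'''(x₀)·conj(T'(x₀)))/μ² and q = Re(i·T'''(x₀)·conj(T'(x₀)))/μ². -/
/-!
The real derivative of `γ̃` at `x` is `v ↦ (2π)⁻¹ Re (A x * v)` with
`A = 2 T̄ T' / (1 - |T|²) + T'' / T'` (so `A = 4π ∂γ̃/∂z`). At a zero of `T` the first summand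
has real derivative `w ↦ 2 |T'|² w̄`, and where also `T'' = 0` the second has complex derivative
`T''' / T'`. Hence `D²γ̃(x₀)(w, v) = (2π)⁻¹ Re ((2 |T'|² w̄ + (T''' / T') w) v)`, and evaluating on
`1` and `i` gives the matrix.

That `T'(x₀) ≠ 0` is the classical fact that an injective holomorphic map has nonvanishing
derivative: otherwise `T - T(x₀) = ψ ^ N` near `x₀` for a local coordinate `ψ` and some `N ≥ 2`,
and `ψ⁻¹(w)`, `ψ⁻¹(ζ w)` with `ζ` a primitive `N`-th root of unity have the same image.
-/

open Complex

/-- The Robin function `γ̃(x) = -(1/(2π))·log(1 - |T(x)|²) + (1/(2π))·log|T'(x)|`. -/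
noncomputable def robin (T : ℂ → ℂ) (x : ℂ) : ℝ :=
  -(2 * Real.pi)⁻¹ * Real.log (1 - ‖T x‖ ^ 2)
    + (2 * Real.pi)⁻¹ * Real.log (‖deriv T x‖)

open Filter Topology Set ComplexConjugate

lemma AnalyticAt.exists_pow_eq {g : ℂ → ℂ} {z₀ : ℂ} (hg : AnalyticAt ℂ g z₀) (hg₀ : g z₀ ≠ 0)
    {N : ℕ} (hN : N ≠ 0) : ∃ h : ℂ → ℂ, AnalyticAt ℂ h z₀ ∧ h z₀ ≠ 0 ∧ ∀ z, h z ^ N = g z := by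
  -- normalising by `g z₀` keeps the base of the power near `1`, inside the slit plane
  refine ⟨fun z => (g z / g z₀) ^ (N⁻¹ : ℂ) * g z₀ ^ (N⁻¹ : ℂ), ?_, ?_, fun z => ?_⟩
  · refine ((hg.div analyticAt_const hg₀).cpow analyticAt_const ?_).mul analyticAt_const
    simp [hg₀]
  · simp [hg₀, hN]
  · rw [mul_pow, cpow_nat_inv_pow _ hN, cpow_nat_inv_pow _ hN, div_mul_cancel₀ _ hg₀]

lemma HasStrictDerivAt.not_injOn_pow {ψ : ℂ → ℂ} {c z₀ : ℂ} (hψ : HasStrictDerivAt ψ c z₀)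
    (hc : c ≠ 0) (hψ₀ : ψ z₀ = 0) {N : ℕ} (hN : 2 ≤ N) {s : Set ℂ} (hs : s ∈ 𝓝 z₀) :
    ¬InjOn (fun z => ψ z ^ N) s := by
  intro hinj
  obtain ⟨ζ, hζ⟩ : ∃ ζ : ℂ, IsPrimitiveRoot ζ N := ⟨_, isPrimitiveRoot_exp N (by omega)⟩
  have himage : ∀ᶠ w in 𝓝 0, w ∈ ψ '' s := hψ₀ ▸ hψ.map_nhds_eq hc ▸ image_mem_map hs
  have hrot : ∀ᶠ w in 𝓝 0, ζ * w ∈ ψ '' s :=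
    ((continuous_const_mul ζ).tendsto' 0 0 (mul_zero ζ)).eventually himage
  obtain ⟨w, ⟨⟨z₁, hz₁, hψz₁⟩, ⟨z₂, hz₂, hψz₂⟩⟩, hw⟩ :=
    (((himage.and hrot).filter_mono nhdsWithin_le_nhds).and
      (self_mem_nhdsWithin (s := {0}ᶜ))).exists
  have hz : z₁ = z₂ := hinj hz₁ hz₂ (by simp only [hψz₁, hψz₂, mul_pow, hζ.pow_eq_one, one_mul])
  have hζw : ζ * w = 1 * w := by rw [← hψz₂, ← hz, hψz₁, one_mul]
  exact hζ.ne_one (by omega) (mul_right_cancel₀ hw hζw)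

lemma AnalyticAt.deriv_ne_zero_of_injOn {f : ℂ → ℂ} {z₀ : ℂ} {s : Set ℂ} (hf : AnalyticAt ℂ f z₀)
    (hs : s ∈ 𝓝 z₀) (hinj : InjOn f s) : deriv f z₀ ≠ 0 := by
  intro hf'
  set F := fun z => f z - f z₀
  have hF : AnalyticAt ℂ F z₀ := hf.sub analyticAt_const
  have hFinj : InjOn F s := fun a ha b hb hab => hinj ha hb (sub_left_inj.mp hab)
  by_cases hconst : ∀ᶠ z in 𝓝 z₀, F z = 0
  · obtain ⟨z, ⟨hFz, hz⟩, hzz₀⟩ :=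
      (((hconst.and (eventually_mem_set.mpr hs)).filter_mono nhdsWithin_le_nhds).and
        (self_mem_nhdsWithin (s := {z₀}ᶜ))).exists
    exact hzz₀ (hFinj hz (mem_of_mem_nhds hs) (by simp [hFz, F]))
  obtain ⟨n, g, hg, hg₀, hFg⟩ := hF.exists_eventuallyEq_pow_smul_nonzero_iff.mpr hconst
  obtain _ | _ | n := n
  · exact hg₀ (by simpa [F] using hFg.self_of_nhds.symm)
  · have : HasDerivAt F (g z₀) z₀ := by
      refine ((((hasDerivAt_id z₀).sub_const z₀).mul hg.differentiableAt.hasDerivAt).congr_deriv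
        (by simp)).congr_of_eventuallyEq ?_
      filter_upwards [hFg] with z hz
      simpa using hz
    exact hg₀ (by rw [← this.deriv, deriv_sub_const, hf'])
  obtain ⟨h, hh, hh₀, hhg⟩ := hg.exists_pow_eq hg₀ (N := n + 2) (by omega)
  have hψ : HasStrictDerivAt (fun z => (z - z₀) * h z) (h z₀) z₀ := by
    simpa [sub_eq_add_neg] using
      ((hasStrictDerivAt_id z₀).add_const (-z₀)).fun_mul hh.hasStrictDerivAt
  refine hψ.not_injOn_pow hh₀ (by simp) (N := n + 2) le_add_self (inter_mem hs hFg) ?_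
  refine hFinj.mono inter_subset_left |>.congr fun z hz => ?_
  simpa [mul_pow, hhg] using hz.2

noncomputable def reMulCLM : ℂ →L[ℝ] ℂ →L[ℝ] ℝ :=
  (ContinuousLinearMap.compL ℝ ℂ ℂ ℝ reCLM).comp (ContinuousLinearMap.mul ℝ ℂ)

@[simp]
lemma reMulCLM_apply (c v : ℂ) : reMulCLM c v = (c * v).re := rfl

section

variable {f : ℂ → ℂ} {a x : ℂ}

lemma HasDerivAt.hasFDerivAt_norm_sq (hf : HasDerivAt f a x) :
    HasFDerivAt (fun y => ‖f y‖ ^ 2) (reMulCLM (2 * conj (f x) * a)) x := by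
  refine hf.complexToReal_fderiv.norm_sq.congr_fderiv (ContinuousLinearMap.ext fun v => ?_)
  simp only [smul_apply, ContinuousLinearMap.comp_apply, coe_innerSL_apply, Complex.inner,
    one_apply_eq_self, smul_eq_mul, reMulCLM_apply]
  rw [two_nsmul, ← add_re]
  congr 1
  ring

lemma HasDerivAt.hasFDerivAt_log_norm (hf : HasDerivAt f a x) (hx : f x ≠ 0) :
    HasFDerivAt (fun y => Real.log ‖f y‖) (reMulCLM (a / f x)) x := by
  have hlog : (fun y => Real.log ‖f y‖) = fun y => 2⁻¹ * Real.log (‖f y‖ ^ 2) := by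
    ext y
    rw [Real.log_pow]
    ring
  rw [hlog]
  refine ((hf.hasFDerivAt_norm_sq.log (by simpa using hx)).const_mul 2⁻¹).congr_fderiv
    (ContinuousLinearMap.ext fun v => ?_)
  simp only [FunLike.coe_smul, Pi.smul_apply, reMulCLM_apply, smul_eq_mul]
  rw [div_eq_mul_inv, inv_def, normSq_eq_norm_sq, ← mul_assoc, ← re_ofReal_mul]
  congr 1
  push_cast
  ring

end

noncomputable def robinDerivCoeff (T : ℂ → ℂ) (x : ℂ) : ℂ :=
  (1 - ‖T x‖ ^ 2)⁻¹ • (2 * conj (T x) * deriv T x) + deriv (deriv T) x / deriv T x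

lemma robin_hasFDerivAt {T : ℂ → ℂ} {x : ℂ} (hT' : DifferentiableAt ℂ (deriv T) x)
    (hTx : ‖T x‖ < 1) (hT'x : deriv T x ≠ 0) :
    HasFDerivAt (robin T) ((2 * Real.pi)⁻¹ • reMulCLM (robinDerivCoeff T x)) x := by
  have hT := (differentiableAt_of_deriv_ne_zero hT'x).hasDerivAt
  have hpos : 1 - ‖T x‖ ^ 2 ≠ 0 := by nlinarith [norm_nonneg (T x)]
  have h₁ := (hT.hasFDerivAt_norm_sq.const_sub 1).log hpos
  have h₂ := hT'.hasDerivAt.hasFDerivAt_log_norm hT'x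
  refine ((h₁.const_mul _).add (h₂.const_mul _)).congr_fderiv
    (ContinuousLinearMap.ext fun v => ?_)
  simp only [robinDerivCoeff, FunLike.coe_add, Pi.add_apply, FunLike.coe_smul, Pi.smul_apply,
    FunLike.coe_neg, Pi.neg_apply, reMulCLM_apply, smul_eq_mul, add_mul, smul_mul_assoc, add_re,
    smul_re]
  ring

lemma robinDerivCoeff_hasFDerivAt {T : ℂ → ℂ} {x₀ : ℂ} (hT' : DifferentiableAt ℂ (deriv T) x₀)
    (hT'' : DifferentiableAt ℂ (deriv (deriv T)) x₀) (hT0 : T x₀ = 0) (hT'x : deriv T x₀ ≠ 0) :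
    HasFDerivAt (robinDerivCoeff T)
      ((2 * ‖deriv T x₀‖ ^ 2) • (conjCLE : ℂ →L[ℝ] ℂ)
        + ((deriv (deriv (deriv T)) x₀ * deriv T x₀ - deriv (deriv T) x₀ ^ 2) / deriv T x₀ ^ 2)
          • (1 : ℂ →L[ℝ] ℂ)) x₀ := by
  have hT := (differentiableAt_of_deriv_ne_zero hT'x).hasDerivAt
  have hpos : 1 - ‖T x₀‖ ^ 2 ≠ 0 := by simp [hT0]
  have hscalar : DifferentiableAt ℝ (fun x => (1 - ‖T x‖ ^ 2)⁻¹) x₀ :=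
    (hT.hasFDerivAt_norm_sq.const_sub 1).differentiableAt.fun_inv hpos
  have hconj : HasFDerivAt (fun x => conj (T x)) ((conjCLE : ℂ →L[ℝ] ℂ) ∘L (deriv T x₀ • 1)) x₀ :=
    (conjCLE : ℂ →L[ℝ] ℂ).hasFDerivAt.comp x₀ hT.complexToReal_fderiv
  have h₁ :=
    hscalar.hasFDerivAt.smul ((hconj.const_mul 2).mul' hT'.hasDerivAt.complexToReal_fderiv)
  have h₂ := (hT''.hasDerivAt.div hT'.hasDerivAt hT'x).complexToReal_fderiv
  refine (h₁.add h₂).congr_fderiv (ContinuousLinearMap.ext fun v => ?_)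
  simp only [hT0, norm_zero, map_zero, zero_mul, mul_zero, zero_smul, zero_add, add_zero,
    ContinuousLinearMap.smulRight_zero, add_apply, smul_apply, ContinuousLinearMap.comp_apply,
    one_apply_eq_self, smul_eq_mul, ContinuousLinearEquiv.coe_coe, conjCLE_apply, map_mul,
    Pi.mul_apply, zero_pow two_ne_zero, sub_zero, inv_one, one_smul, op_smul_eq_mul, real_smul,
    ofReal_mul, ofReal_pow, ofReal_ofNat, ← mul_conj']
  ring

lemma re_mul_conj_div_norm_sq (z w : ℂ) : (z * conj w).re / ‖w‖ ^ 2 = (z / w).re := by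
  rw [div_eq_mul_inv z, inv_def, ← mul_assoc, normSq_eq_norm_sq, re_mul_ofReal, div_eq_mul_inv]

lemma matrix_of_re_smul_conj_add_mul (m : ℝ) (a : ℂ) :
    (Matrix.of fun i j : Fin 2 => ((m • conj (![1, I] i) + a * ![1, I] i) * ![1, I] j).re)
      = !![m + a.re, (I * a).re; (I * a).re, m - a.re] := by
  ext i j
  fin_cases i <;> fin_cases j <;> simp [sub_eq_neg_add]

lemma HasFDerivAt.fderiv_clm_apply_const {𝕜 E F G : Type*} [NontriviallyNormedField 𝕜]
    [NormedAddCommGroup E] [NormedSpace 𝕜 E] [NormedAddCommGroup F] [NormedSpace 𝕜 F]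
    [NormedAddCommGroup G] [NormedSpace 𝕜 G] {f : E → F →L[𝕜] G} {f' : E →L[𝕜] F →L[𝕜] G} {x : E}
    (h : HasFDerivAt f f' x) (v : F) (w : E) : fderiv 𝕜 (fun y => f y v) x w = f' w v := by
  rw [(h.clm_apply (hasFDerivAt_const v x)).fderiv]
  simp

lemma robin_hasFDerivAt_fderiv {T : ℂ → ℂ} {x₀ : ℂ} {L : ℂ →L[ℝ] ℂ} (hT : AnalyticAt ℂ T x₀)
    (hTx₀ : ‖T x₀‖ < 1) (hT'x₀ : deriv T x₀ ≠ 0) (hL : HasFDerivAt (robinDerivCoeff T) L x₀) :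
    HasFDerivAt (fderiv ℝ (robin T)) (((2 * Real.pi)⁻¹ • reMulCLM) ∘L L) x₀ := by
  have hfd : fderiv ℝ (robin T) =ᶠ[𝓝 x₀]
      fun x => (2 * Real.pi)⁻¹ • reMulCLM (robinDerivCoeff T x) := by
    filter_upwards [hT.eventually_analyticAt,
      hT.continuousAt.norm.eventually_lt continuousAt_const hTx₀,
      hT.deriv.continuousAt.eventually_ne hT'x₀] with x hTx hnorm hT'x
    exact (robin_hasFDerivAt hTx.deriv.differentiableAt hnorm hT'x).fderiv
  exact (((2 * Real.pi)⁻¹ • reMulCLM).hasFDerivAt.comp x₀ hL).congr_of_eventuallyEq hfd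

theorem stmt2_general
    (Ω : Set ℂ) (hΩo : IsOpen Ω)
    (x₀ : ℂ) (hx₀ : x₀ ∈ Ω)
    (T : ℂ → ℂ) (hTd : DifferentiableOn ℂ T Ω)
    (hTbij : Set.BijOn T Ω (Metric.ball 0 1))
    (hT0 : T x₀ = 0)
    (hT2 : iteratedDeriv 2 T x₀ = 0) :
    DifferentiableAt ℝ (fderiv ℝ (robin T)) x₀ ∧
    ∀ p q : ℝ,
      p = (iteratedDeriv 3 T x₀ * (starRingEnd ℂ) (deriv T x₀)).re
            / ‖deriv T x₀‖ ^ 2 →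
      q = (Complex.I * iteratedDeriv 3 T x₀ * (starRingEnd ℂ) (deriv T x₀)).re
            / ‖deriv T x₀‖ ^ 2 →
      (Matrix.of fun i j : Fin 2 =>
          fderiv ℝ (fun x => fderiv ℝ (robin T) x (![1, Complex.I] j)) x₀ (![1, Complex.I] i))
        = (2 * Real.pi)⁻¹ •
            !![2 * ‖deriv T x₀‖ ^ 2 + p, q;
               q, 2 * ‖deriv T x₀‖ ^ 2 - p] := by
  have hT : AnalyticAt ℂ T x₀ := hTd.analyticOnNhd hΩo x₀ hx₀
  have hT'x₀ : deriv T x₀ ≠ 0 := hT.deriv_ne_zero_of_injOn (hΩo.mem_nhds hx₀) hTbij.injOn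
  have hH := robin_hasFDerivAt_fderiv hT (by simp [hT0]) hT'x₀ <|
    robinDerivCoeff_hasFDerivAt hT.deriv.differentiableAt hT.deriv.deriv.differentiableAt hT0 hT'x₀
  refine ⟨hH.differentiableAt, fun p q hp hq => ?_⟩
  simp only [iteratedDeriv_succ, iteratedDeriv_zero] at hT2 hp hq
  have hcoeff : (deriv (deriv (deriv T)) x₀ * deriv T x₀ - deriv (deriv T) x₀ ^ 2)
      / deriv T x₀ ^ 2 = deriv (deriv (deriv T)) x₀ / deriv T x₀ := by
    rw [hT2, sq, sq, zero_mul, sub_zero, mul_div_mul_right _ _ hT'x₀]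
  rw [hp, hq, re_mul_conj_div_norm_sq, re_mul_conj_div_norm_sq, mul_div_assoc,
    ← matrix_of_re_smul_conj_add_mul]
  ext i j
  simp only [Matrix.of_apply, Matrix.smul_apply, hH.fderiv_clm_apply_const, hcoeff, smul_eq_mul,
    ContinuousLinearMap.coe_comp, Function.comp_apply, FunLike.coe_add, FunLike.coe_smul,
    Pi.add_apply, Pi.smul_apply, reMulCLM_apply, ContinuousLinearEquiv.coe_coe, conjCLE_apply,
    one_apply_eq_self]

/-- if `T''(x₀) = 0` then the Robin function is twice differentiable at `x₀`
and its Hessian matrix (in the basis `(1, i)` of `ℂ` over `ℝ`) is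
`(1/(2π))·[[2μ² + p, q],[q, 2μ² − p]]` with `μ² = |T'(x₀)|²`,
`p = Re(T'''(x₀)·conj(T'(x₀)))/μ²`, `q = Re(i·T'''(x₀)·conj(T'(x₀)))/μ²`. -/
theorem stmt2
    (Ω : Set ℂ) (hΩo : IsOpen Ω) (hΩb : Bornology.IsBounded Ω)
    (hΩc : IsConnected Ω) (hΩsc : SimplyConnectedSpace Ω)
    (x₀ : ℂ) (hx₀ : x₀ ∈ Ω)
    (T : ℂ → ℂ) (hTd : DifferentiableOn ℂ T Ω)
    (hTbij : Set.BijOn T Ω (Metric.ball 0 1))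
    (hT0 : T x₀ = 0)
    (hT2 : iteratedDeriv 2 T x₀ = 0) :
    DifferentiableAt ℝ (fderiv ℝ (robin T)) x₀ ∧
    ∀ p q : ℝ,
      p = (iteratedDeriv 3 T x₀ * (starRingEnd ℂ) (deriv T x₀)).re
            / ‖deriv T x₀‖ ^ 2 →
      q = (Complex.I * iteratedDeriv 3 T x₀ * (starRingEnd ℂ) (deriv T x₀)).re
            / ‖deriv T x₀‖ ^ 2 →
      (Matrix.of fun i j : Fin 2 =>
          fderiv ℝ (fun x => fderiv ℝ (robin T) x (![1, Complex.I] j)) x₀ (![1, Complex.I] i))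
        = (2 * Real.pi)⁻¹ •
            !![2 * ‖deriv T x₀‖ ^ 2 + p, q;
               q, 2 * ‖deriv T x₀‖ ^ 2 - p] :=
  stmt2_general Ω hΩo x₀ hx₀ T hTd hTbij hT0 hT2
end

section
/- The Robin function γ̃ is smooth on Ω and its Laplacian satisfies Δγ̃(x) = 2·|T'(x)|² / (π·(1 − |T(x)|²)²) for every x ∈ Ω; in particular Δγ̃(x) > 0 everywhere, i.e. −γ̃ is superharmonic. -/
open Complex Set Filter Metric

-- n-th root of a nonvanishing analytic function
lemma nth_root_exists {h : ℂ → ℂ} {z : ℂ} (hh : AnalyticAt ℂ h z) (h0 : h z ≠ 0) (n : ℕ) (hn : n ≠ 0) :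
    ∃ r : ℂ → ℂ, AnalyticAt ℂ r z ∧ r z ≠ 0 ∧ ∀ᶠ y in nhds z, r y ^ n = h y := by
  set r : ℂ → ℂ := fun y => Complex.exp ((Complex.log (h z) + Complex.log (h y / h z)) / n)
  have hq : AnalyticAt ℂ (fun y => h y / h z) z := hh.div analyticAt_const h0
  have hq1 : (fun y => h y / h z) z = 1 := by simp [div_self h0]
  have hlog : AnalyticAt ℂ (fun y => Complex.log (h y / h z)) z := by
    apply hq.clog
    rw [div_self h0]
    exact Complex.one_mem_slitPlane
  refine ⟨r, ?_, ?_, ?_⟩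
  · exact ((analyticAt_const.add hlog).div analyticAt_const (by exact_mod_cast hn)).cexp
  · exact Complex.exp_ne_zero _
  · have hever : ∀ᶠ y in nhds z, h y / h z ∈ Complex.slitPlane := by
      have : ContinuousAt (fun y => h y / h z) z := hq.continuousAt
      have := this.eventually_mem (Complex.isOpen_slitPlane.mem_nhds (by rw [div_self h0]; exact Complex.one_mem_slitPlane))
      exact this
    filter_upwards [hever] with y hy
    have hyne : h y / h z ≠ 0 := Complex.slitPlane_ne_zero hy
    have : r y ^ n = Complex.exp (n * ((Complex.log (h z) + Complex.log (h y / h z)) / n)) := by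
      rw [← Complex.exp_nat_mul]
    rw [this, mul_div_cancel₀ _ (by exact_mod_cast hn : (n:ℂ) ≠ 0), Complex.exp_add,
      Complex.exp_log h0, Complex.exp_log hyne]
    field_simp

lemma deriv_ne_zero_of_injOn {U : Set ℂ} (hU : IsOpen U) {T : ℂ → ℂ}
    (hT : DifferentiableOn ℂ T U) (hinj : Set.InjOn T U) {z : ℂ} (hz : z ∈ U) :
    deriv T z ≠ 0 := by
  intro hd
  have hTa : AnalyticAt ℂ T z := hT.analyticAt (hU.mem_nhds hz)
  set f : ℂ → ℂ := fun y => T y - T z with hfdef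
  have hfa : AnalyticAt ℂ f z := hTa.sub analyticAt_const
  have hnev : ¬ ∀ᶠ y in nhds z, f y = 0 := by
    intro hev
    have h2 : ∀ᶠ y in nhdsWithin z {z}ᶜ, f y = 0 ∧ y ∈ U :=
      ((hev.and (hU.eventually_mem hz)).filter_mono nhdsWithin_le_nhds)
    obtain ⟨y, ⟨hy0, hyU⟩, hyne⟩ := (h2.and self_mem_nhdsWithin).exists
    have : T y = T z := by simpa [hfdef, sub_eq_zero] using hy0
    exact hyne (hinj hyU hz this)
  have hord : analyticOrderAt f z ≠ ⊤ := fun h => hnev (analyticOrderAt_eq_top.1 h)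
  obtain ⟨n, hn⟩ : ∃ n : ℕ, analyticOrderAt f z = n := by
    cases h : analyticOrderAt f z with
    | top => exact absurd h hord
    | coe n => exact ⟨n, by simp [h]⟩
  obtain ⟨g, hg, hg0, hfg⟩ := hfa.analyticOrderAt_eq_natCast.1 hn
  have hfz : f z = 0 := by simp [hfdef]
  have hn0 : n ≠ 0 := by
    rintro rfl
    have := hfg.self_of_nhds
    simp [hfz] at this
    exact hg0 this.symm
  have hn1 : n ≠ 1 := by
    rintro rfl
    have hder : HasDerivAt (fun y => (y - z) ^ 1 • g y) ((1 : ℂ) * g z + (z - z) * deriv g z) z := by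
      simpa [pow_one, smul_eq_mul] using
        (((hasDerivAt_id z).sub_const z).fun_mul hg.differentiableAt.hasDerivAt)
    have h1 : deriv f z = g z := by
      have heq : deriv f z = deriv (fun y => (y - z) ^ 1 • g y) z :=
        Filter.EventuallyEq.deriv_eq hfg
      rw [heq]
      simpa using hder.deriv
    have h2 : deriv f z = deriv T z := by
      simp only [hfdef]
      exact deriv_sub_const _
    rw [h2, hd] at h1
    exact hg0 h1.symm
  obtain ⟨r, hra, hr0, hrn⟩ := nth_root_exists hg hg0 n hn0
  set ψ : ℂ → ℂ := fun y => (y - z) * r y with hψdef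
  have hψa : AnalyticAt ℂ ψ z := (analyticAt_id.sub analyticAt_const).mul hra
  have hψd : HasDerivAt ψ (r z) z := by
    simpa using (((hasDerivAt_id z).sub_const z).fun_mul hra.differentiableAt.hasDerivAt)
  have hψs : HasStrictDerivAt ψ (r z) z := by
    obtain ⟨p, hp⟩ := hψa
    have h1 := hp.hasStrictDerivAt
    rwa [hp.hasDerivAt.unique hψd] at h1
  have hfψ : ∀ᶠ y in nhds z, f y = ψ y ^ n := by
    filter_upwards [hfg, hrn] with y e1 e2
    rw [e1, hψdef]
    simp only [smul_eq_mul, mul_pow, e2]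
  set Φ := HasStrictFDerivAt.toOpenPartialHomeomorph ψ (hψs.hasStrictFDerivAt_equiv hr0) with hΦdef
  have hzsrc : z ∈ Φ.source := HasStrictFDerivAt.mem_toOpenPartialHomeomorph_source (hψs.hasStrictFDerivAt_equiv hr0)
  have hV : ({y | f y = ψ y ^ n} ∩ (Φ.source ∩ U)) ∈ nhds z :=
    inter_mem hfψ (inter_mem (Φ.open_source.mem_nhds hzsrc) (hU.mem_nhds hz))
  have himg : ψ '' ({y | f y = ψ y ^ n} ∩ (Φ.source ∩ U)) ∈ nhds (0 : ℂ) := by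
    have hm := hψs.map_nhds_eq hr0
    have : ψ z = 0 := by simp [hψdef]
    rw [this] at hm
    rw [← hm]
    exact image_mem_map hV
  obtain ⟨ε, hε, hball⟩ := Metric.mem_nhds_iff.1 himg
  set w₁ : ℂ := ((ε/2 : ℝ) : ℂ) with hw₁def
  set w₂ : ℂ := w₁ * Complex.exp (2 * Real.pi * Complex.I / n) with hw₂def
  have hnC : (n : ℂ) ≠ 0 := Nat.cast_ne_zero.2 hn0
  have habs2 : ‖Complex.exp (2 * Real.pi * Complex.I / n)‖ = 1 := by
    rw [Complex.norm_exp]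
    have : (2 * Real.pi * Complex.I / n).re = 0 := by
      simp [Complex.div_re]
    rw [this, Real.exp_zero]
  have hw1m : w₁ ∈ ball (0 : ℂ) ε := by
    simp only [mem_ball, dist_zero_right, hw₁def, Complex.norm_real, Real.norm_eq_abs]
    rw [abs_of_pos (by linarith)]
    linarith
  have hw2m : w₂ ∈ ball (0 : ℂ) ε := by
    simp only [mem_ball, dist_zero_right, hw₂def, norm_mul]
    rw [show ‖Complex.exp (2 * Real.pi * Complex.I / n)‖ = 1 from habs2, mul_one,
      Complex.norm_real, Real.norm_eq_abs, abs_of_pos (by linarith : (0:ℝ) < ε/2)]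
    linarith
  have hw1ne : w₁ ≠ 0 := by
    simp [hw₁def, Complex.ofReal_eq_zero]
    linarith
  have hexpne : Complex.exp (2 * Real.pi * Complex.I / n) ≠ 1 := by
    intro hE
    obtain ⟨k, hk⟩ := Complex.exp_eq_one_iff.mp hE
    have h2pi : (2 * Real.pi * Complex.I) ≠ 0 := by
      simp [Complex.I_ne_zero, Real.pi_ne_zero]
    have h1 : (1 : ℂ) * (2 * Real.pi * Complex.I) = (k * n) * (2 * Real.pi * Complex.I) := by
      have h2 := congrArg (fun w => w * (n:ℂ)) hk
      simp only [div_mul_cancel₀ _ hnC] at h2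
      linear_combination h2
    have hkn : (k : ℂ) * n = 1 := mul_right_cancel₀ h2pi h1.symm
    have : (k * n : ℤ) = 1 := by exact_mod_cast hkn
    have : (n : ℤ) ∣ 1 := Dvd.intro_left k this
    have : n = 1 := by
      have := Int.eq_one_of_dvd_one (by positivity) this
      exact_mod_cast this
    omega
  have hwne : w₁ ≠ w₂ := by
    intro h
    rw [hw₂def] at h
    nth_rewrite 1 [show w₁ = w₁ * 1 by ring] at h
    exact hexpne (mul_left_cancel₀ hw1ne h.symm)
  have hwn : w₁ ^ n = w₂ ^ n := by
    rw [hw₂def, mul_pow, ← Complex.exp_nat_mul]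
    rw [show (n : ℂ) * (2 * Real.pi * Complex.I / n) = 2 * Real.pi * Complex.I by field_simp]
    rw [Complex.exp_two_pi_mul_I, mul_one]
  obtain ⟨y₁, hy₁V, hy₁⟩ := hball hw1m
  obtain ⟨y₂, hy₂V, hy₂⟩ := hball hw2m
  have hyne : y₁ ≠ y₂ := fun h => hwne (by rw [← hy₁, ← hy₂, h])
  have hTeq : T y₁ = T y₂ := by
    have e1 : f y₁ = w₁ ^ n := by rw [← hy₁]; exact hy₁V.1
    have e2 : f y₂ = w₂ ^ n := by rw [← hy₂]; exact hy₂V.1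
    have : f y₁ = f y₂ := by rw [e1, e2, hwn]
    simpa [hfdef, sub_eq_sub_iff_sub_eq_sub, sub_left_inj] using this
  exact hyne (hinj hy₁V.2.2 hy₂V.2.2 hTeq)

lemma key_smooth (A B C : ℝ) {g : ℂ → ℂ} {U : Set ℂ} (hU : IsOpen U)
    (hg : DifferentiableOn ℂ g U)
    (hpos : ∀ y ∈ U, 0 < B + C * Complex.normSq (g y)) :
    ContDiffOn ℝ (⊤ : ℕ∞) (fun w => A * Real.log (B + C * Complex.normSq (g w))) U := by
  intro x hx
  have hga : AnalyticAt ℂ g x := hg.analyticAt (hU.mem_nhds hx)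
  have hgc : ContDiffAt ℝ (⊤ : ℕ∞) g x := (hga.restrictScalars).contDiffAt
  have h1 : ContDiffAt ℝ (⊤ : ℕ∞) (fun w => (g w).re) x :=
    (Complex.reCLM.contDiff.contDiffAt (x := g x)).comp x hgc
  have h2 : ContDiffAt ℝ (⊤ : ℕ∞) (fun w => (g w).im) x :=
    (Complex.imCLM.contDiff.contDiffAt (x := g x)).comp x hgc
  have hu : ContDiffAt ℝ (⊤ : ℕ∞) (fun w => B + C * Complex.normSq (g w)) x := by
    have : ContDiffAt ℝ (⊤ : ℕ∞) (fun w => B + C * ((g w).re * (g w).re + (g w).im * (g w).im)) x :=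
      contDiffAt_const.add (contDiffAt_const.mul ((h1.mul h1).add (h2.mul h2)))
    simp only [Complex.normSq_apply]
    exact this
  have hlog : ContDiffAt ℝ (⊤ : ℕ∞) (fun w => Real.log (B + C * Complex.normSq (g w))) x :=
    (Real.contDiffAt_log (n := (⊤ : ℕ∞)) |>.2 (ne_of_gt (hpos x hx))).comp (g := Real.log) x hu
  exact (contDiffAt_const.mul hlog).contDiffWithinAt

lemma key (A B C : ℝ) {g : ℂ → ℂ} {U : Set ℂ} (hU : IsOpen U)
    (hg : DifferentiableOn ℂ g U)
    (hpos : ∀ y ∈ U, 0 < B + C * Complex.normSq (g y)) :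
    ∃ p q : ℂ → ℝ,
      (∀ y ∈ U, DifferentiableAt ℝ (fun w => A * Real.log (B + C * Complex.normSq (g w))) y ∧
        fderiv ℝ (fun w => A * Real.log (B + C * Complex.normSq (g w))) y 1 = p y ∧
        fderiv ℝ (fun w => A * Real.log (B + C * Complex.normSq (g w))) y Complex.I = q y) ∧
      ∀ x ∈ U, DifferentiableAt ℝ p x ∧ DifferentiableAt ℝ q x ∧
        fderiv ℝ p x 1 + fderiv ℝ q x Complex.I
          = 4*A*B*C * Complex.normSq (deriv g x) / (B + C * Complex.normSq (g x))^2 := by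
  have hdg : ∀ y ∈ U, HasDerivAt g (deriv g y) y := fun y hy =>
    (hg.differentiableAt (hU.mem_nhds hy)).hasDerivAt
  have hdg2 : ∀ y ∈ U, HasDerivAt (deriv g) (deriv (deriv g) y) y := fun y hy =>
    (((hg.analyticOnNhd hU).deriv y hy).differentiableAt).hasDerivAt
  refine ⟨fun y => 2*A*C*((g y).re * (deriv g y).re + (g y).im * (deriv g y).im)
      * (B + C * Complex.normSq (g y))⁻¹,
    fun y => 2*A*C*((g y).im * (deriv g y).re - (g y).re * (deriv g y).im)
      * (B + C * Complex.normSq (g y))⁻¹, ?_, ?_⟩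
  · intro y hy
    have hgF : HasFDerivAt g
        (((1 : ℂ →L[ℂ] ℂ).smulRight (deriv g y)).restrictScalars ℝ) y :=
      (hdg y hy).hasFDerivAt.restrictScalars ℝ
    have hre : HasFDerivAt (fun w => (g w).re)
        (Complex.reCLM.comp (((1 : ℂ →L[ℂ] ℂ).smulRight (deriv g y)).restrictScalars ℝ)) y := by
      have := (Complex.reCLM.hasFDerivAt (x := g y)).comp y hgF
      simpa [Function.comp_def] using this
    have him : HasFDerivAt (fun w => (g w).im)
        (Complex.imCLM.comp (((1 : ℂ →L[ℂ] ℂ).smulRight (deriv g y)).restrictScalars ℝ)) y := by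
      have := (Complex.imCLM.hasFDerivAt (x := g y)).comp y hgF
      simpa [Function.comp_def] using this
    have hu := (((hre.mul hre).add (him.mul him)).const_mul C).const_add B
    have hupos : (0:ℝ) < B + C * ((g y).re * (g y).re + (g y).im * (g y).im) := by
      have := hpos y hy; rwa [Complex.normSq_apply] at this
    have hlog := (Real.hasDerivAt_log (ne_of_gt hupos)).comp_hasFDerivAt y hu
    have hf := hlog.const_mul A
    simp only [Function.comp_def, Pi.add_apply, Pi.mul_apply] at hf
    have hfun : (fun w => A * Real.log (B + C * Complex.normSq (g w)))
        = (fun w => A * Real.log (B + C * ((g w).re * (g w).re + (g w).im * (g w).im))) := by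
      funext w; rw [Complex.normSq_apply]
    rw [hfun]
    simp only [Complex.normSq_apply]
    refine ⟨hf.differentiableAt, ?_, ?_⟩
    · rw [hf.fderiv]
      simp [ContinuousLinearMap.smul_apply, ContinuousLinearMap.add_apply,
        ContinuousLinearMap.comp_apply, ContinuousLinearMap.coe_restrictScalars',
        ContinuousLinearMap.smulRight_apply, ContinuousLinearMap.one_apply, smul_eq_mul]
      field_simp
      ring
    · rw [hf.fderiv]
      simp [ContinuousLinearMap.smul_apply, ContinuousLinearMap.add_apply,
        ContinuousLinearMap.comp_apply, ContinuousLinearMap.coe_restrictScalars',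
        ContinuousLinearMap.smulRight_apply, ContinuousLinearMap.one_apply, smul_eq_mul,
        Complex.mul_re, Complex.mul_im]
      field_simp
      ring
  · intro x hx
    have hgF : HasFDerivAt g
        (((1 : ℂ →L[ℂ] ℂ).smulRight (deriv g x)).restrictScalars ℝ) x :=
      (hdg x hx).hasFDerivAt.restrictScalars ℝ
    have hdgF : HasFDerivAt (deriv g)
        (((1 : ℂ →L[ℂ] ℂ).smulRight (deriv (deriv g) x)).restrictScalars ℝ) x :=
      (hdg2 x hx).hasFDerivAt.restrictScalars ℝ
    have hre : HasFDerivAt (fun w => (g w).re)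
        (Complex.reCLM.comp (((1 : ℂ →L[ℂ] ℂ).smulRight (deriv g x)).restrictScalars ℝ)) x := by
      simpa [Function.comp_def] using (Complex.reCLM.hasFDerivAt (x := g x)).comp x hgF
    have him : HasFDerivAt (fun w => (g w).im)
        (Complex.imCLM.comp (((1 : ℂ →L[ℂ] ℂ).smulRight (deriv g x)).restrictScalars ℝ)) x := by
      simpa [Function.comp_def] using (Complex.imCLM.hasFDerivAt (x := g x)).comp x hgF
    have hre' : HasFDerivAt (fun w => (deriv g w).re)
        (Complex.reCLM.comp (((1 : ℂ →L[ℂ] ℂ).smulRight (deriv (deriv g) x)).restrictScalars ℝ)) x := by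
      simpa [Function.comp_def] using (Complex.reCLM.hasFDerivAt (x := deriv g x)).comp x hdgF
    have him' : HasFDerivAt (fun w => (deriv g w).im)
        (Complex.imCLM.comp (((1 : ℂ →L[ℂ] ℂ).smulRight (deriv (deriv g) x)).restrictScalars ℝ)) x := by
      simpa [Function.comp_def] using (Complex.imCLM.hasFDerivAt (x := deriv g x)).comp x hdgF
    have hupos : (0:ℝ) < B + C * ((g x).re * (g x).re + (g x).im * (g x).im) := by
      have := hpos x hx; rwa [Complex.normSq_apply] at this
    have hu := (((hre.mul hre).add (him.mul him)).const_mul C).const_add B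
    have hN1 := (hre.mul hre').add (him.mul him')
    have hN2 := (him.mul hre').sub (hre.mul him')
    have huinv := (hasDerivAt_inv (ne_of_gt hupos)).comp_hasFDerivAt x hu
    simp only [Function.comp_def] at huinv
    have hp := (hN1.const_mul (2*A*C)).mul huinv
    have hq := (hN2.const_mul (2*A*C)).mul huinv
    simp only [Pi.mul_def, Pi.add_def, Pi.sub_def] at hp hq
    simp only [Complex.normSq_apply]
    refine ⟨hp.differentiableAt, hq.differentiableAt, ?_⟩
    rw [hp.fderiv, hq.fderiv]
    simp only [ContinuousLinearMap.smul_apply, ContinuousLinearMap.add_apply,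
      ContinuousLinearMap.sub_apply, ContinuousLinearMap.comp_apply,
      ContinuousLinearMap.coe_restrictScalars', ContinuousLinearMap.smulRight_apply,
      ContinuousLinearMap.one_apply, smul_eq_mul, Complex.reCLM_apply, Complex.imCLM_apply,
      Complex.mul_re, Complex.mul_im, Complex.one_re, Complex.one_im, Complex.I_re, Complex.I_im]
    set a1 := (g x).re
    set a2 := (g x).im
    set b1 := (deriv g x).re
    set b2 := (deriv g x).im
    set c1 := (deriv (deriv g) x).re
    set c2 := (deriv (deriv g) x).im
    have hune : B + C * (a1 * a1 + a2 * a2) ≠ 0 := ne_of_gt hupos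
    field_simp
    ring


/-- the Robin function is smooth on `Ω` and
`Δγ̃(x) = 2|T'(x)|²/(π(1−|T(x)|²)²) > 0` on `Ω`; in particular `−γ̃` is superharmonic. -/
theorem stmt16
    (Ω : Set ℂ) (hΩo : IsOpen Ω) (hΩb : Bornology.IsBounded Ω)
    (hΩc : IsConnected Ω) (hΩsc : SimplyConnectedSpace Ω)
    (T : ℂ → ℂ) (hTd : DifferentiableOn ℂ T Ω)
    (hTbij : Set.BijOn T Ω (Metric.ball 0 1)) :
    ContDiffOn ℝ (⊤ : ℕ∞) (robin T) Ω ∧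
    ∀ x ∈ Ω,
      fderiv ℝ (fun y => fderiv ℝ (robin T) y 1) x 1
          + fderiv ℝ (fun y => fderiv ℝ (robin T) y Complex.I) x Complex.I
        = 2 * ‖deriv T x‖ ^ 2
            / (Real.pi * (1 - ‖T x‖ ^ 2) ^ 2) ∧
      0 < fderiv ℝ (fun y => fderiv ℝ (robin T) y 1) x 1
          + fderiv ℝ (fun y => fderiv ℝ (robin T) y Complex.I) x Complex.I := by
  have hT' : ∀ z ∈ Ω, deriv T z ≠ 0 := fun z hz =>
    deriv_ne_zero_of_injOn hΩo hTd hTbij.injOn hz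
  have hTd' : DifferentiableOn ℂ (deriv T) Ω :=
    ((hTd.analyticOnNhd hΩo).deriv).differentiableOn
  have hpos1 : ∀ y ∈ Ω, (0:ℝ) < 1 + (-1) * Complex.normSq (T y) := by
    intro y hy
    have h0 := hTbij.mapsTo hy
    rw [Metric.mem_ball, dist_zero_right] at h0
    have h1 : Complex.normSq (T y) < 1 := by
      rw [Complex.normSq_eq_norm_sq]
      nlinarith [norm_nonneg (T y)]
    linarith
  have hpos2 : ∀ y ∈ Ω, (0:ℝ) < 0 + 1 * Complex.normSq (deriv T y) := by
    intro y hy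
    have := Complex.normSq_pos.2 (hT' y hy)
    linarith
  have hrobin : robin T = fun y => (-(2*Real.pi)⁻¹) * Real.log (1 + (-1) * Complex.normSq (T y))
      + ((2*Real.pi)⁻¹/2) * Real.log (0 + 1 * Complex.normSq (deriv T y)) := by
    funext y
    simp only [robin, Complex.sq_norm, Complex.norm_def, Real.sq_sqrt (Complex.normSq_nonneg _),
      Real.log_sqrt (Complex.normSq_nonneg _)]
    ring
  constructor
  · rw [hrobin]
    exact (key_smooth (-(2*Real.pi)⁻¹) 1 (-1) hΩo hTd hpos1).add
      (key_smooth ((2*Real.pi)⁻¹/2) 0 1 hΩo hTd' hpos2)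
  · obtain ⟨p1, q1, h1, h1'⟩ := key (-(2*Real.pi)⁻¹) 1 (-1) hΩo hTd hpos1
    obtain ⟨p2, q2, h2, h2'⟩ := key ((2*Real.pi)⁻¹/2) 0 1 hΩo hTd' hpos2
    intro x hx
    have e1 : (fun y => fderiv ℝ (robin T) y 1) =ᶠ[nhds x] (fun y => p1 y + p2 y) := by
      filter_upwards [hΩo.mem_nhds hx] with y hy
      rw [hrobin, fderiv_fun_add ((h1 y hy).1) ((h2 y hy).1), ContinuousLinearMap.add_apply,
        (h1 y hy).2.1, (h2 y hy).2.1]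
    have e2 : (fun y => fderiv ℝ (robin T) y Complex.I) =ᶠ[nhds x] (fun y => q1 y + q2 y) := by
      filter_upwards [hΩo.mem_nhds hx] with y hy
      rw [hrobin, fderiv_fun_add ((h1 y hy).1) ((h2 y hy).1), ContinuousLinearMap.add_apply,
        (h1 y hy).2.2, (h2 y hy).2.2]
    have E1 : fderiv ℝ (fun y => fderiv ℝ (robin T) y 1) x 1 = fderiv ℝ p1 x 1 + fderiv ℝ p2 x 1 := by
      rw [e1.fderiv_eq, fderiv_fun_add ((h1' x hx).1) ((h2' x hx).1), ContinuousLinearMap.add_apply]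
    have E2 : fderiv ℝ (fun y => fderiv ℝ (robin T) y Complex.I) x Complex.I
        = fderiv ℝ q1 x Complex.I + fderiv ℝ q2 x Complex.I := by
      rw [e2.fderiv_eq, fderiv_fun_add ((h1' x hx).2.1) ((h2' x hx).2.1), ContinuousLinearMap.add_apply]
    have S : fderiv ℝ (fun y => fderiv ℝ (robin T) y 1) x 1
        + fderiv ℝ (fun y => fderiv ℝ (robin T) y Complex.I) x Complex.I
        = 2 * ‖deriv T x‖ ^ 2 / (Real.pi * (1 - ‖T x‖ ^ 2) ^ 2) := by
      rw [E1, E2]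
      have F1 := (h1' x hx).2.2
      have F2 := (h2' x hx).2.2
      have : fderiv ℝ p1 x 1 + fderiv ℝ p2 x 1
          + (fderiv ℝ q1 x Complex.I + fderiv ℝ q2 x Complex.I)
          = (fderiv ℝ p1 x 1 + fderiv ℝ q1 x Complex.I)
          + (fderiv ℝ p2 x 1 + fderiv ℝ q2 x Complex.I) := by ring
      rw [this, F1, F2]
      simp only [← Complex.sq_norm]
      simp only [mul_zero, zero_mul, zero_div, add_zero]
      have hd : (0:ℝ) < 1 - ‖T x‖ ^ 2 := by
        have := hpos1 x hx
        rw [← Complex.sq_norm] at this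
        linarith
      have ha : (1 + -1 * ‖T x‖ ^ 2) = 1 - ‖T x‖^2 := by ring
      rw [ha, div_eq_div_iff (by positivity) (by positivity : (Real.pi * (1 - ‖T x‖^2)^2) ≠ 0)]
      field_simp
      ring
    refine ⟨S, ?_⟩
    rw [S]
    have hd : (0:ℝ) < 1 - ‖T x‖ ^ 2 := by
      have := hpos1 x hx
      rw [← Complex.sq_norm] at this
      linarith
    have hb : ‖deriv T x‖ ≠ 0 := by
      simpa [norm_eq_zero] using hT' x hx
    have hb2 : (0:ℝ) < ‖deriv T x‖ ^ 2 :=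
      pow_pos ((norm_nonneg _).lt_of_ne (Ne.symm hb)) 2
    have hpi := Real.pi_pos
    positivity
end
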